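/- For every integer k ≥ 0 and every real x ≥ (k+1)·2^{k+2} one has g_k(x) < (4/3)·g_k(x + 2^k). -/

import Mathlib

/-!
Since `1 / (x + ℓ) = ∫₀^∞ e^{-(x+ℓ)t} dt` and `∑_{ℓ < 2^k} ε_ℓ z^ℓ = ∏_{i<k} (1 - z^{2^i})`, one has
`g_k(x) = ∫₀^∞ e^{-xt} ∏_{i<k} (1 - e^{-2^i t}) dt` for `x > 0`; in particular `g_k(x) > 0`.
Substituting `t = s / x` gives `x^{k+1} g_k(x) = ∫₀^∞ e^{-s} ∏_{i<k} x (1 - e^{-2^i s / x}) ds`,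
and each factor `x (1 - e^{-c/x})` is nondecreasing in `x` because `u ↦ 1 - e^{-u}` is concave and
vanishes at `0`. So `x^{k+1} g_k(x)` is nondecreasing, whence
`g_k(x) ≤ (1 + 2^k/x)^{k+1} g_k(x + 2^k)`, and `(1 + 2^k/x)^{k+1} ≤ e^{(k+1) 2^k / x} ≤ e^{1/4} < 4/3`.
-/

/-- Thue–Morse signs: `tmSign n = ε_n = (-1)^{t_n}`, where `t_n` is the parity of
the number of ones in the binary representation of `n`. -/
noncomputable def tmSign (n : ℕ) : ℝ := (-1 : ℝ) ^ (Nat.digits 2 n).sum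

/-- `gFun k x = g_k(x) = ∑_{0 ≤ ℓ < 2^k} ε_ℓ / (x + ℓ)`. -/
noncomputable def gFun (k : ℕ) (x : ℝ) : ℝ :=
  ∑ ℓ ∈ Finset.range (2 ^ k), tmSign ℓ / (x + ℓ)

open Real MeasureTheory Set Finset

lemma tmSign_add_two_pow {k ℓ : ℕ} (hℓ : ℓ < 2 ^ k) : tmSign (ℓ + 2 ^ k) = -tmSign ℓ := by
  have hlen : (Nat.digits 2 ℓ).length ≤ k := (Nat.digits_length_le_iff one_lt_two ℓ).2 hℓ
  -- the binary digits of `ℓ + 2 ^ k` are those of `ℓ`, padded with zeros to length `k`, then a `1`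
  have hdigits := Nat.digits_append_zeroes_append_digits (k := k - (Nat.digits 2 ℓ).length)
    (n := ℓ) one_lt_two one_pos
  rw [Nat.add_sub_cancel' hlen, mul_one] at hdigits
  rw [tmSign, tmSign, ← hdigits]
  simp [pow_succ]

lemma sum_range_two_pow_tmSign_mul_pow (k : ℕ) (z : ℝ) :
    ∑ ℓ ∈ range (2 ^ k), tmSign ℓ * z ^ ℓ = ∏ i ∈ range k, (1 - z ^ 2 ^ i) := by
  induction k with
  | zero => simp [tmSign]
  | succ k ih =>
    rw [pow_succ, mul_two, sum_range_add, prod_range_succ, ← ih, mul_one_sub, sub_eq_add_neg,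
      ← neg_mul, ← sum_neg_distrib, sum_mul]
    congr 1
    refine sum_congr rfl fun ℓ hℓ => ?_
    rw [add_comm, tmSign_add_two_pow (mem_range.1 hℓ), pow_add]
    ring

noncomputable def tmWeight (k : ℕ) (t : ℝ) : ℝ := ∏ i ∈ range k, (1 - exp (-(2 ^ i * t)))

lemma sum_range_two_pow_tmSign_mul_exp (k : ℕ) (t : ℝ) :
    ∑ ℓ ∈ range (2 ^ k), tmSign ℓ * exp (-ℓ * t) = tmWeight k t := by
  have hexp (n : ℕ) : exp (-n * t) = exp (-t) ^ n := by rw [← exp_nat_mul]; ring_nf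
  simp only [hexp, sum_range_two_pow_tmSign_mul_pow, tmWeight]
  refine prod_congr rfl fun i _ => ?_
  rw [← hexp]
  push_cast
  ring_nf

@[fun_prop]
lemma continuous_tmWeight (k : ℕ) : Continuous (tmWeight k) := by
  unfold tmWeight; fun_prop

lemma one_sub_exp_neg_nonneg {u : ℝ} (hu : 0 ≤ u) : 0 ≤ 1 - exp (-u) := by
  simpa using hu

lemma tmWeight_nonneg (k : ℕ) {t : ℝ} (ht : 0 ≤ t) : 0 ≤ tmWeight k t :=
  prod_nonneg fun i _ => one_sub_exp_neg_nonneg (by positivity)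

lemma tmWeight_le_one (k : ℕ) {t : ℝ} (ht : 0 ≤ t) : tmWeight k t ≤ 1 :=
  prod_le_one (fun i _ => one_sub_exp_neg_nonneg (by positivity))
    fun i _ => sub_le_self _ (exp_nonneg _)

lemma tmWeight_pos (k : ℕ) {t : ℝ} (ht : 0 < t) : 0 < tmWeight k t :=
  prod_pos fun i _ => by simpa using (by positivity : 0 < 2 ^ i * t)

lemma integrableOn_exp_neg_mul_mul {f : ℝ → ℝ} {b C : ℝ} (hb : 0 < b) (hf : Continuous f)
    (hfC : ∀ t > 0, |f t| ≤ C) : IntegrableOn (fun t => exp (-b * t) * f t) (Ioi 0) :=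
  (exp_neg_integrableOn_Ioi 0 hb).mul_bdd hf.aestronglyMeasurable
    ((ae_restrict_mem measurableSet_Ioi).mono hfC)

lemma integral_exp_neg_mul_Ioi_zero {b : ℝ} (hb : 0 < b) :
    ∫ t in Ioi 0, exp (-b * t) = b⁻¹ := by
  rw [integral_exp_mul_Ioi (neg_neg_iff_pos.2 hb)]
  simp

lemma gFun_eq_integral (k : ℕ) {x : ℝ} (hx : 0 < x) :
    gFun k x = ∫ t in Ioi 0, exp (-x * t) * tmWeight k t := by
  have hsum (t : ℝ) : exp (-x * t) * tmWeight k t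
      = ∑ ℓ ∈ range (2 ^ k), tmSign ℓ * exp (-(x + ℓ) * t) := by
    rw [← sum_range_two_pow_tmSign_mul_exp, mul_sum]
    refine sum_congr rfl fun ℓ _ => ?_
    rw [neg_add, add_mul, exp_add]
    ring
  have hint (ℓ : ℕ) : IntegrableOn (fun t => tmSign ℓ * exp (-(x + ℓ) * t)) (Ioi 0) :=
    (exp_neg_integrableOn_Ioi 0 (by positivity)).const_mul _
  simp only [hsum, gFun]
  rw [integral_finsetSum _ fun ℓ _ => hint ℓ]
  refine sum_congr rfl fun ℓ _ => ?_
  rw [integral_const_mul, integral_exp_neg_mul_Ioi_zero (by positivity), div_eq_mul_inv]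

lemma gFun_pos (k : ℕ) {x : ℝ} (hx : 0 < x) : 0 < gFun k x := by
  have hint : IntegrableOn (fun t => exp (-x * t) * tmWeight k t) (Ioi 0) :=
    integrableOn_exp_neg_mul_mul hx (continuous_tmWeight k) fun t ht => by
      rw [abs_of_nonneg (tmWeight_nonneg k ht.le)]; exact tmWeight_le_one k ht.le
  have hpos : ∀ t ∈ Ioi (0 : ℝ), 0 < exp (-x * t) * tmWeight k t :=
    fun t ht => mul_pos (exp_pos _) (tmWeight_pos k ht)
  rw [gFun_eq_integral k hx, setIntegral_pos_iff_support_of_nonneg_ae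
    ((ae_restrict_mem measurableSet_Ioi).mono fun t ht => (hpos t ht).le) hint,
    inter_eq_right.2 fun t ht => Function.mem_support.2 (hpos t ht).ne', Real.volume_Ioi]
  exact ENNReal.zero_lt_top

lemma pow_succ_mul_gFun_eq_integral (k : ℕ) {x : ℝ} (hx : 0 < x) :
    x ^ (k + 1) * gFun k x = ∫ s in Ioi 0, exp (-s) * (x ^ k * tmWeight k (x⁻¹ * s)) := by
  have hsubst : gFun k x = x⁻¹ * ∫ s in Ioi 0, exp (-s) * tmWeight k (x⁻¹ * s) := by
    rw [gFun_eq_integral k hx]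
    have h := integral_comp_mul_left_Ioi (fun s => exp (-s) * tmWeight k (x⁻¹ * s)) 0 hx
    simp only [mul_zero, smul_eq_mul, inv_mul_cancel_left₀ hx.ne', neg_mul] at h ⊢
    exact h
  rw [hsubst, ← integral_const_mul, ← integral_const_mul]
  congr 1 with s
  field_simp
  ring

lemma mul_one_sub_exp_neg_div_le {c x y : ℝ} (hx : 0 < x) (hxy : x ≤ y) :
    x * (1 - exp (-(c / x))) ≤ y * (1 - exp (-(c / y))) := by
  have hy : 0 < y := hx.trans_le hxy
  have hconv := convexOn_exp.2 (mem_univ (-(c / x))) (mem_univ 0) (div_nonneg hx.le hy.le)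
    (sub_nonneg.2 ((div_le_one hy).2 hxy)) (add_sub_cancel _ _)
  simp only [smul_eq_mul, mul_zero, add_zero, exp_zero, mul_one] at hconv
  rw [show x / y * -(c / x) = -(c / y) by field_simp] at hconv
  calc x * (1 - exp (-(c / x))) = y * (x / y * (1 - exp (-(c / x)))) := by field_simp
    _ ≤ y * (1 - exp (-(c / y))) := by gcongr; linarith

lemma pow_mul_tmWeight_inv_mul_le (k : ℕ) {s x y : ℝ} (hs : 0 ≤ s) (hx : 0 < x) (hxy : x ≤ y) :
    x ^ k * tmWeight k (x⁻¹ * s) ≤ y ^ k * tmWeight k (y⁻¹ * s) := by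
  have hprod (z : ℝ) : z ^ k * tmWeight k (z⁻¹ * s)
      = ∏ i ∈ range k, z * (1 - exp (-(2 ^ i * s / z))) := by
    rw [prod_mul_distrib, prod_const, card_range, tmWeight]
    congr 2 with i
    ring_nf
  rw [hprod, hprod]
  exact prod_le_prod (fun i _ => mul_nonneg hx.le (one_sub_exp_neg_nonneg (by positivity)))
    fun i _ => mul_one_sub_exp_neg_div_le hx hxy

lemma integrableOn_exp_neg_mul_pow_mul_tmWeight (k : ℕ) {x : ℝ} (hx : 0 < x) :
    IntegrableOn (fun s => exp (-s) * (x ^ k * tmWeight k (x⁻¹ * s))) (Ioi 0) := by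
  have hbound (s : ℝ) (hs : 0 < s) : |x ^ k * tmWeight k (x⁻¹ * s)| ≤ x ^ k := by
    have hs' : 0 ≤ x⁻¹ * s := by positivity
    rw [abs_of_nonneg (mul_nonneg (by positivity) (tmWeight_nonneg k hs'))]
    exact mul_le_of_le_one_right (by positivity) (tmWeight_le_one k hs')
  simpa using integrableOn_exp_neg_mul_mul one_pos (by fun_prop) hbound

lemma monotoneOn_pow_succ_mul_gFun (k : ℕ) :
    MonotoneOn (fun x => x ^ (k + 1) * gFun k x) (Ioi 0) := by
  intro x hx y hy hxy
  simp only [pow_succ_mul_gFun_eq_integral k hx, pow_succ_mul_gFun_eq_integral k hy]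
  refine setIntegral_mono_on (integrableOn_exp_neg_mul_pow_mul_tmWeight k hx)
    (integrableOn_exp_neg_mul_pow_mul_tmWeight k hy) measurableSet_Ioi fun s hs => ?_
  exact mul_le_mul_of_nonneg_left (pow_mul_tmWeight_inv_mul_le k (le_of_lt hs) hx hxy)
    (exp_nonneg _)

lemma one_add_pow_lt_four_thirds {a : ℝ} {n : ℕ} (ha : 0 ≤ a) (hna : n * a ≤ 1 / 4) :
    (1 + a) ^ n < 4 / 3 :=
  calc (1 + a) ^ n ≤ exp a ^ n := by gcongr; linarith [add_one_le_exp a]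
    _ = exp (n * a) := (exp_nat_mul a n).symm
    _ ≤ exp (1 / 4) := exp_le_exp.2 hna
    _ < 1 / (1 - 1 / 4) := exp_bound_div_one_sub_of_interval' (by norm_num) (by norm_num)
    _ = 4 / 3 := by norm_num

/-- for every `k ≥ 0` and every real `x ≥ (k+1)·2^{k+2}` one has
`g_k(x) < (4/3)·g_k(x + 2^k)`. -/
theorem stmt_6 (k : ℕ) (x : ℝ) (hx : ((k : ℝ) + 1) * 2 ^ (k + 2) ≤ x) :
    gFun k x < 4 / 3 * gFun k (x + 2 ^ k) := by
  have hx0 : 0 < x := lt_of_lt_of_le (by positivity) hx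
  have hy0 : 0 < x + 2 ^ k := by positivity
  have hmono : x ^ (k + 1) * gFun k x ≤ (x + 2 ^ k) ^ (k + 1) * gFun k (x + 2 ^ k) :=
    monotoneOn_pow_succ_mul_gFun k hx0 hy0 (le_add_of_nonneg_right (by positivity))
  have hratio : ((x + 2 ^ k) / x) ^ (k + 1) < 4 / 3 := by
    rw [add_div, div_self hx0.ne']
    refine one_add_pow_lt_four_thirds (by positivity) ?_
    rw [mul_div_assoc', div_le_iff₀ hx0]
    push_cast
    linarith [show ((k : ℝ) + 1) * 2 ^ (k + 2) = 4 * ((k + 1) * 2 ^ k) by ring]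
  calc gFun k x = x ^ (k + 1) * gFun k x / x ^ (k + 1) := by field_simp
    _ ≤ (x + 2 ^ k) ^ (k + 1) * gFun k (x + 2 ^ k) / x ^ (k + 1) := by gcongr
    _ = ((x + 2 ^ k) / x) ^ (k + 1) * gFun k (x + 2 ^ k) := by rw [div_pow]; ring
    _ < 4 / 3 * gFun k (x + 2 ^ k) := by gcongr; exact gFun_pos k hy0
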